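/- arXiv:1201.2322 — 3 statements merged into one kernel-verified Lean document; each statement's English description precedes it below -/
import Mathlib

section
/- Let r : ℂ → ℂ be an entire function that takes real values on the real axis, let M ≥ 1 be an integer and N = 2M, and for z ≠ 0 set F_N(z) = r(z) + z^N·r(1/z). Let θ_j = π/(2M) + (π/M)·j and 𝓘_j = [θ_j, θ_{j+1}] for j = 0, …, N−1. If the function θ ↦ Im r(e^{iθ}) has at most J zeros in the half-open interval [π/(2M), π/(2M) + 2π), then for at least N − J of the indices j ∈ {0, …, N−1} there exists θ ∈ 𝓘_j with F_N(e^{iθ}) = 0. -/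
/-!
On the unit circle `z⁻¹ = conj z`, and Schwarz reflection gives `r (conj z) = conj (r z)`, so
`F_N(z) = z^M · 2 Re(conj (z^M) · r z)`: `F_N(e^{iθ})` vanishes exactly where the real function
`g θ = Re(e^{-iMθ} r(e^{iθ}))` does. Since `Mθ_j = π/2 + πj`, the endpoint values are
`g θ_j = (-1)^j Im r(e^{iθ_j})`. If `F_N` has no zero on `𝓘_j`, then `g` keeps its sign there, so
`Im r(e^{iθ})` has opposite signs at `θ_j` and `θ_{j+1}` and vanishes in the open interval. Open
intervals of distinct indices are disjoint, so there are at most `J` such indices.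
-/

open Complex ComplexConjugate Real Set Filter Topology

theorem Differentiable.apply_conj_eq_conj_apply {r : ℂ → ℂ} (hr : Differentiable ℂ r)
    (hreal : ∀ x : ℝ, (r x).im = 0) (z : ℂ) : r (conj z) = conj (r z) := by
  have hr' : Differentiable ℂ (conj ∘ r ∘ conj) := fun w => by
    simpa using (hr (conj w)).conj_conj
  have hofReal : Tendsto ((↑) : ℝ → ℂ) (𝓝[≠] 0) (𝓝[≠] 0) :=
    continuous_ofReal.continuousWithinAt.tendsto_nhdsWithin fun _ _ ↦ by simp_all
  have hfreq : ∃ᶠ w in 𝓝[≠] (0 : ℂ), (conj ∘ r ∘ conj) w = r w :=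
    hofReal.frequently <| .of_forall fun x => by simp [conj_eq_iff_im.mpr (hreal x)]
  have := (analyticOnNhd_univ_iff_differentiable.mpr hr').eq_of_frequently_eq
    (analyticOnNhd_univ_iff_differentiable.mpr hr) hfreq
  simpa using (congrFun this (conj z)).symm

theorem add_sq_mul_conj_eq_mul_re {u w : ℂ} (hu : ‖u‖ = 1) :
    w + u ^ 2 * conj w = u * (2 * (conj u * w).re : ℝ) := by
  have hu' : u * conj u = 1 := by simp [mul_conj, normSq_eq_norm_sq, hu]
  rw [← add_conj, map_mul, conj_conj]
  linear_combination (-w) * hu'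

theorem apply_add_pow_mul_apply_inv_eq {r : ℂ → ℂ} (hconj : ∀ z, r (conj z) = conj (r z))
    (M : ℕ) {z : ℂ} (hz : ‖z‖ = 1) :
    r z + z ^ (2 * M) * r z⁻¹ = z ^ M * (2 * (conj (z ^ M) * r z).re : ℝ) := by
  rw [inv_eq_conj hz, hconj, pow_mul']
  exact add_sq_mul_conj_eq_mul_re (by rw [norm_pow, hz, one_pow])

theorem exp_mul_I_pow_eq_of_mul_eq {M j : ℕ} {θ : ℝ} (h : M * θ = π / 2 + π * j) :
    exp (θ * I) ^ M = I * ((-1 : ℝ) ^ j : ℝ) := by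
  have : (M : ℂ) * (θ * I) = π / 2 * I + j * (π * I) := by
    rw [← mul_assoc, ← ofReal_natCast, ← ofReal_mul, h]; push_cast; ring
  rw [← Complex.exp_nat_mul, this, Complex.exp_add, Complex.exp_nat_mul, exp_pi_div_two_mul_I,
    exp_pi_mul_I]
  push_cast; rfl

theorem exists_mem_Ioo_eq_zero_of_mul_neg {f : ℝ → ℝ} {a b : ℝ} (hab : a ≤ b)
    (hf : ContinuousOn f (Icc a b)) (h : f a * f b < 0) : ∃ x ∈ Ioo a b, f x = 0 := by
  rcases mul_neg_iff.mp h with ⟨ha, hb⟩ | ⟨ha, hb⟩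
  · exact intermediate_value_Ioo' hab hf ⟨hb, ha⟩
  · exact intermediate_value_Ioo hab hf ⟨ha, hb⟩

theorem exists_mem_Ioo_eq_zero_of_forall_ne_zero {f g : ℝ → ℝ} {a b s : ℝ} (hab : a ≤ b)
    (hf : ContinuousOn f (Icc a b)) (hg : ContinuousOn g (Icc a b))
    (hga : g a = s * f a) (hgb : g b = -(s * f b)) (hg0 : ∀ x ∈ Icc a b, g x ≠ 0) :
    ∃ x ∈ Ioo a b, f x = 0 := by
  have hgab : 0 < g a * g b := by
    by_contra! h
    rcases h.lt_or_eq with h | h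
    · obtain ⟨x, hx, hx0⟩ := exists_mem_Ioo_eq_zero_of_mul_neg hab hg h
      exact hg0 x (Ioo_subset_Icc_self hx) hx0
    · rcases mul_eq_zero.mp h with h | h
      exacts [hg0 a (left_mem_Icc.2 hab) h, hg0 b (right_mem_Icc.2 hab) h]
  have hfab : s ^ 2 * (f a * f b) = -(g a * g b) := by rw [hga, hgb]; ring
  exact exists_mem_Ioo_eq_zero_of_mul_neg hab hf
    (neg_of_mul_neg_right (by linarith) (sq_nonneg s))

theorem ncard_le_ncard_of_forall_exists_mem_Ioo {S : Set ℝ} (hS : S.Finite) {a d : ℝ}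
    (hd : 0 ≤ d) {B : Set ℕ} (h : ∀ j ∈ B, ∃ x ∈ S, x ∈ Ioo (a + d * j) (a + d * (j + 1))) :
    B.ncard ≤ S.ncard := by
  choose! f hfS hfI using h
  refine ncard_le_ncard_of_injOn f hfS (StrictMonoOn.injOn fun i hi k hk hik => ?_) hS
  calc f i < a + d * (i + 1) := (hfI i hi).2
    _ ≤ a + d * k := by gcongr; exact_mod_cast hik
    _ < f k := (hfI k hk).1

theorem exists_mem_Ioo_im_eq_zero_of_forall_ne_zero {r : ℂ → ℂ} (hr : Differentiable ℂ r)
    (hreal : ∀ x : ℝ, (r x).im = 0) {M j : ℕ} {a b : ℝ}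
    (ha : M * a = π / 2 + π * j) (hb : M * b = π / 2 + π * (j + 1))
    (hF : ∀ θ ∈ Icc a b,
      r (exp (θ * I)) + exp (θ * I) ^ (2 * M) * r (exp (θ * I))⁻¹ ≠ 0) :
    ∃ θ ∈ Ioo a b, (r (exp (θ * I))).im = 0 := by
  have hab : a ≤ b := by
    by_contra! h
    nlinarith [pi_pos, mul_le_mul_of_nonneg_left h.le (Nat.cast_nonneg M : (0 : ℝ) ≤ M)]
  have hb' : M * b = π / 2 + π * (j + 1 : ℕ) := by push_cast; exact hb
  have hexp : Continuous fun θ : ℝ => exp (θ * I) := by fun_prop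
  refine exists_mem_Ioo_eq_zero_of_forall_ne_zero (s := (-1) ^ j)
    (g := fun θ => (conj (exp (θ * I) ^ M) * r (exp (θ * I))).re) hab
    (continuous_im.comp (hr.continuous.comp hexp)).continuousOn
    (continuous_re.comp ((continuous_conj.comp (hexp.pow M)).mul
      (hr.continuous.comp hexp))).continuousOn ?_ ?_ fun θ hθ h0 => hF θ hθ ?_
  · rw [exp_mul_I_pow_eq_of_mul_eq ha]
    generalize (-1 : ℝ) ^ j = s
    simp
  · rw [exp_mul_I_pow_eq_of_mul_eq hb', pow_succ]
    generalize (-1 : ℝ) ^ j = s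
    simp
  · rw [apply_add_pow_mul_apply_inv_eq (hr.apply_conj_eq_conj_apply hreal) M
      (norm_exp_ofReal_mul_I θ), h0]
    simp

theorem Ioo_add_mul_subset_Ico {a d : ℝ} (hd : 0 ≤ d) {j n : ℕ} (hj : j < n) :
    Ioo (a + d * j) (a + d * (j + 1)) ⊆ Ico a (a + d * n) := by
  have : (j : ℝ) + 1 ≤ n := by exact_mod_cast hj
  exact Ioo_subset_Ico_self.trans
    (Ico_subset_Ico (by simp; positivity) (by gcongr))

theorem F_has_many_zeros_on_circle_general
    (r : ℂ → ℂ) (hr : Differentiable ℂ r)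
    (hreal : ∀ x : ℝ, (r x).im = 0)
    (M : ℕ) (J : ℕ)
    (hfin : {θ : ℝ | θ ∈ Set.Ico (π / (2 * M)) (π / (2 * M) + 2 * π) ∧
      (r (Complex.exp ((θ : ℝ) * Complex.I))).im = 0}.Finite)
    (hcard : {θ : ℝ | θ ∈ Set.Ico (π / (2 * M)) (π / (2 * M) + 2 * π) ∧
      (r (Complex.exp ((θ : ℝ) * Complex.I))).im = 0}.ncard ≤ J) :
    2 * M - J ≤ {j : ℕ | j < 2 * M ∧
      ∃ θ ∈ Set.Icc (π / (2 * M) + π / M * (j : ℝ)) (π / (2 * M) + π / M * ((j : ℝ) + 1)),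
        r (Complex.exp ((θ : ℝ) * Complex.I))
          + (Complex.exp ((θ : ℝ) * Complex.I)) ^ (2 * M)
            * r ((Complex.exp ((θ : ℝ) * Complex.I))⁻¹) = 0}.ncard := by
  set good := {j : ℕ | j < 2 * M ∧ _}
  have hbad : (Iio (2 * M) \ good).ncard ≤ J := by
    refine (ncard_le_ncard_of_forall_exists_mem_Ioo hfin (a := π / (2 * M)) (d := π / M)
      (by positivity) ?_).trans hcard
    rintro j ⟨hj : j < 2 * M, hj_bad⟩
    have hM : (M : ℝ) ≠ 0 := by norm_cast; omega
    obtain ⟨θ, hθ, hθ0⟩ := exists_mem_Ioo_im_eq_zero_of_forall_ne_zero hr hreal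
      (M := M) (j := j) (a := π / (2 * M) + π / M * j) (b := π / (2 * M) + π / M * (j + 1))
      (by field_simp) (by field_simp) fun θ hθ h0 => hj_bad ⟨hj, θ, hθ, h0⟩
    have h2π : π / (2 * M) + 2 * π = π / (2 * M) + π / M * (2 * M : ℕ) := by
      push_cast; field_simp
    refine ⟨θ, ⟨?_, hθ0⟩, hθ⟩
    rw [h2π]
    exact Ioo_add_mul_subset_Ico (by positivity) hj hθ
  have hsplit := ncard_inter_add_ncard_sdiff_eq_ncard (Iio (2 * M)) good
  rw [inter_eq_right.mpr fun j hj => hj.1, ncard_Iio_nat] at hsplit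
  omega

/-- For an entire function `r` that is real on the real axis and `N = 2M`,
if `θ ↦ Im r(e^{iθ})` has at most `J` zeros in `[π/(2M), π/(2M) + 2π)`, then for at least
`N - J` of the `N` intervals `𝓘_j = [θ_j, θ_{j+1}]`, `j = 0, …, N-1`, the function
`F_N(z) = r(z) + z^N r(1/z)` has a zero `e^{iθ}` with `θ ∈ 𝓘_j`. -/
theorem F_has_many_zeros_on_circle
    (r : ℂ → ℂ) (hr : Differentiable ℂ r)
    (hreal : ∀ x : ℝ, (r x).im = 0)
    (M : ℕ) (hM : 1 ≤ M) (J : ℕ)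
    (hfin : {θ : ℝ | θ ∈ Set.Ico (π / (2 * M)) (π / (2 * M) + 2 * π) ∧
      (r (Complex.exp ((θ : ℝ) * Complex.I))).im = 0}.Finite)
    (hcard : {θ : ℝ | θ ∈ Set.Ico (π / (2 * M)) (π / (2 * M) + 2 * π) ∧
      (r (Complex.exp ((θ : ℝ) * Complex.I))).im = 0}.ncard ≤ J) :
    2 * M - J ≤ {j : ℕ | j < 2 * M ∧
      ∃ θ ∈ Set.Icc (π / (2 * M) + π / M * (j : ℝ)) (π / (2 * M) + π / M * ((j : ℝ) + 1)),
        r (Complex.exp ((θ : ℝ) * Complex.I))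
          + (Complex.exp ((θ : ℝ) * Complex.I)) ^ (2 * M)
            * r ((Complex.exp ((θ : ℝ) * Complex.I))⁻¹) = 0}.ncard :=
  F_has_many_zeros_on_circle_general r hr hreal M J hfin hcard
end

section
/- Let S(z) = sin(2πz) − sin(2π/z) for z ≠ 0. Then |S(z)| > 1 for every z ∈ ℂ with |z| = 4/5 or |z| = 5/4. -/
open Real Complex

/-!
Since `sin a - sin b = 2 sin((a-b)/2) cos((a+b)/2)`, `S(z) = 2 sin(π(z - 1/z)) cos(π(z + 1/z))`,
and `S(1/z) = -S(z)` reduces the circle `|z| = 4/5` to `|z| = 5/4`. There `1/z = (16/25) z̄`, so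
with `z = x + iy` the two arguments are `π(9x + 41iy)/25` and `π(41x + 9iy)/25`, and
`|sin(a+ib)|² = sin² a + sinh² b`, `|cos(a+ib)|² = cos² a + sinh² b` reduce the claim to a real
inequality. If `y² ≥ 1/4` the two `sinh²` terms alone suffice, by `|sinh t| ≥ |t|`. Otherwise
`|x| ≥ 229/200`, which puts `41π|x|/25` within `2/5` of `2π` and `9π|x|/25` within `7/25` of `π/2`,
so that `cos ≥ 23/25` and `sin ≥ 24/25` there.
-/

lemma Complex.norm_sin_sq (z : ℂ) : ‖sin z‖ ^ 2 = Real.sin z.re ^ 2 + Real.sinh z.im ^ 2 := by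
  rw [sin_eq, ← ofReal_sin, ← ofReal_cos, ← ofReal_sinh, ← ofReal_cosh, ← ofReal_mul,
    ← ofReal_mul, Complex.sq_norm, normSq_add_mul_I]
  nlinarith [Real.sin_sq_add_cos_sq z.re, Real.cosh_sq z.im]

lemma Complex.norm_cos_sq (z : ℂ) : ‖cos z‖ ^ 2 = Real.cos z.re ^ 2 + Real.sinh z.im ^ 2 := by
  rw [cos_eq, ← ofReal_sin, ← ofReal_cos, ← ofReal_sinh, ← ofReal_cosh, ← ofReal_mul,
    ← ofReal_mul, sub_eq_add_neg, ← neg_mul, ← ofReal_neg, Complex.sq_norm, normSq_add_mul_I]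
  nlinarith [Real.sin_sq_add_cos_sq z.re, Real.cosh_sq z.im]

lemma Real.sq_le_sinh_sq (x : ℝ) : x ^ 2 ≤ sinh x ^ 2 := by
  rw [← sq_abs x, ← sq_abs (sinh x), abs_sinh]
  exact pow_le_pow_left₀ (abs_nonneg x) (self_le_sinh_iff.mpr (abs_nonneg x)) 2

lemma Real.one_sub_sq_div_two_le_cos_of_abs_le {x d : ℝ} (h : |x| ≤ d) :
    1 - d ^ 2 / 2 ≤ Real.cos x := by
  have := sq_le_sq' (abs_le.mp h).1 (abs_le.mp h).2
  linarith [one_sub_sq_div_two_le_cos (x := x)]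

lemma quarter_lt_sinh_sq_mul_sinh_sq {y : ℝ} (hy : 1 / 4 ≤ y ^ 2) :
    1 / 4 < Real.sinh (9 * π * y / 25) ^ 2 * Real.sinh (41 * π * y / 25) ^ 2 := by
  have hπ : 9 < π ^ 2 := by nlinarith [pi_gt_three]
  calc (1 / 4 : ℝ) < (9 * 41 / 625) ^ 2 * π ^ 2 * π ^ 2 * (y ^ 2) ^ 2 := by
        have : 9 * 9 * (1 / 4) ^ 2 ≤ π ^ 2 * π ^ 2 * (y ^ 2) ^ 2 := by gcongr
        nlinarith
    _ = (9 * π * y / 25) ^ 2 * (41 * π * y / 25) ^ 2 := by ring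
    _ ≤ _ := mul_le_mul (sq_le_sinh_sq _) (sq_le_sinh_sq _) (sq_nonneg _) (sq_nonneg _)

lemma quarter_lt_cos_sq_mul_sin_sq {x : ℝ} (hlo : 21 / 16 ≤ x ^ 2) (hhi : x ^ 2 ≤ 25 / 16) :
    1 / 4 < Real.cos (41 * π * x / 25) ^ 2 * Real.sin (9 * π * x / 25) ^ 2 := by
  wlog hx : 0 ≤ x generalizing x
  · have := this (x := -x) (by simpa using hlo) (by simpa using hhi) (by linarith)
    simpa [mul_neg, neg_div, Real.cos_neg, Real.sin_neg] using this
  have hx_lo : 229 / 200 ≤ x := by nlinarith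
  have hx_hi : x ≤ 5 / 4 := by nlinarith
  have hπ_lo := pi_gt_d6
  have hπ_hi := pi_lt_d6
  have hcos : 23 / 25 ≤ Real.cos (41 * π * x / 25) := by
    rw [← Real.cos_sub_two_pi]
    have := one_sub_sq_div_two_le_cos_of_abs_le (x := 41 * π * x / 25 - 2 * π) (d := 2 / 5)
      (abs_le.mpr ⟨by nlinarith, by nlinarith⟩)
    linarith
  have hsin : 24 / 25 ≤ Real.sin (9 * π * x / 25) := by
    rw [← Real.cos_pi_div_two_sub]
    have := one_sub_sq_div_two_le_cos_of_abs_le (x := π / 2 - 9 * π * x / 25) (d := 7 / 25)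
      (abs_le.mpr ⟨by nlinarith, by nlinarith⟩)
    linarith
  calc (1 / 4 : ℝ) < (23 / 25) ^ 2 * (24 / 25) ^ 2 := by norm_num
    _ ≤ _ := by gcongr

lemma quarter_lt_cos_sq_add_sinh_sq_mul_sin_sq_add_sinh_sq {x y : ℝ}
    (h : x ^ 2 + y ^ 2 = 25 / 16) :
    1 / 4 < (Real.cos (41 * π * x / 25) ^ 2 + Real.sinh (9 * π * y / 25) ^ 2) *
      (Real.sin (9 * π * x / 25) ^ 2 + Real.sinh (41 * π * y / 25) ^ 2) := by
  set c := Real.cos (41 * π * x / 25)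
  set s := Real.sin (9 * π * x / 25)
  set a := Real.sinh (9 * π * y / 25)
  set b := Real.sinh (41 * π * y / 25)
  rcases le_or_gt (1 / 4) (y ^ 2) with hy | hy
  · have := quarter_lt_sinh_sq_mul_sinh_sq hy
    nlinarith [mul_nonneg (sq_nonneg c) (sq_nonneg s), mul_nonneg (sq_nonneg c) (sq_nonneg b),
      mul_nonneg (sq_nonneg a) (sq_nonneg s)]
  · have := quarter_lt_cos_sq_mul_sin_sq (x := x) (by linarith) (by nlinarith)
    nlinarith [mul_nonneg (sq_nonneg a) (sq_nonneg b), mul_nonneg (sq_nonneg c) (sq_nonneg b),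
      mul_nonneg (sq_nonneg a) (sq_nonneg s)]

lemma sin_two_pi_mul_sub_sin_two_pi_div (z : ℂ) :
    sin (2 * π * z) - sin (2 * π / z) = 2 * sin (π * (z - z⁻¹)) * cos (π * (z + z⁻¹)) := by
  rw [Complex.sin_sub_sin]
  ring_nf

lemma sin_two_pi_mul_inv_sub_sin_two_pi_div_inv (z : ℂ) :
    sin (2 * π * z⁻¹) - sin (2 * π / z⁻¹) = -(sin (2 * π * z) - sin (2 * π / z)) := by
  rw [div_inv_eq_mul, ← div_eq_mul_inv, neg_sub]

lemma one_lt_norm_sin_two_pi_mul_sub_sin_two_pi_div {z : ℂ} (hz : ‖z‖ = 5 / 4) :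
    1 < ‖sin (2 * π * z) - sin (2 * π / z)‖ := by
  have hnormSq : normSq z = 25 / 16 := by
    rw [← Complex.sq_norm, hz]; norm_num
  have hinv_re : z⁻¹.re = 16 / 25 * z.re := by rw [inv_re, hnormSq]; ring
  have hinv_im : z⁻¹.im = -(16 / 25 * z.im) := by rw [inv_im, hnormSq]; ring
  have hsin := norm_sin_sq (π * (z - z⁻¹))
  have hcos := norm_cos_sq (π * (z + z⁻¹))
  simp only [re_ofReal_mul, im_ofReal_mul, sub_re, sub_im, add_re, add_im, hinv_re,
    hinv_im] at hsin hcos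
  rw [show π * (z.re - 16 / 25 * z.re) = 9 * π * z.re / 25 by ring,
    show π * (z.im - -(16 / 25 * z.im)) = 41 * π * z.im / 25 by ring] at hsin
  rw [show π * (z.re + 16 / 25 * z.re) = 41 * π * z.re / 25 by ring,
    show π * (z.im + -(16 / 25 * z.im)) = 9 * π * z.im / 25 by ring] at hcos
  have key := quarter_lt_cos_sq_add_sinh_sq_mul_sin_sq_add_sinh_sq (x := z.re) (y := z.im)
    (by rw [← hnormSq, normSq_apply]; ring)
  rw [sin_two_pi_mul_sub_sin_two_pi_div, norm_mul, norm_mul, Complex.norm_two]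
  refine (one_lt_sq_iff₀ (by positivity)).mp ?_
  rw [mul_pow, mul_pow, hsin, hcos]
  linarith

/-- `|sin(2πz) - sin(2π/z)| > 1` on the two boundary circles
`|z| = 4/5` and `|z| = 5/4` of the annulus `A`. -/
theorem S_large_on_annulus_boundary (z : ℂ)
    (hz : ‖z‖ = 4 / 5 ∨ ‖z‖ = 5 / 4) :
    1 < ‖Complex.sin (2 * π * z) - Complex.sin (2 * π / z)‖ := by
  rcases hz with hz | hz
  · have := one_lt_norm_sin_two_pi_mul_sub_sin_two_pi_div (z := z⁻¹)
      (by rw [norm_inv, hz]; norm_num)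
    rwa [sin_two_pi_mul_inv_sub_sin_two_pi_div_inv, norm_neg] at this
  · exact one_lt_norm_sin_two_pi_mul_sub_sin_two_pi_div hz
end

section
/- Let w ≥ 78 be an even integer and let q be a polynomial with real coefficients of degree at most w/2 such that q(1) = q(−1) = 0 and |q(z) − sin(2πz)| ≤ 1/100 for all complex z with |z| ≤ 5/4. Let p be the unique polynomial satisfying p(x) = q(x) + x^w·q(1/x) for all x ≠ 0, and assume that p is odd (p(−x) = −p(x) identically) and that p(x) + x^w·p(1 − 1/x) + (x−1)^w·p(−1/(x−1)) = 0 for all x ∉ {0,1}. Then p is a nonzero polynomial of degree w − 1; it has simple zeros at 0, 2, −2, 1/2, −1/2 and zeros of multiplicity exactly 2 at 1 and −1; and every other zero of p lies on the unit circle |z| = 1. -/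
/-!
Write `p(e^{iθ}) = e^{iwθ/2} F(θ)`, where `F` is real because `q` is real and
`p = q + X^w q(1/X)`. Since `q ≈ sin 2πz` on `|z| ≤ 5/4` and `q(±1) = sin(±2π) = 0`, the maximum
principle applied to `(q(z) - sin 2πz)/(z² - 1)` gives `|q - sin 2πz| ≤ (32/900)|sin θ|` at
`z = e^{iθ}`. Hence `F(θ) = e^{2π sin θ} sin(wθ/2 + 2π cos θ) + O(e^{-2π sin θ} + sin θ)`, and since
`e^x - e^{-x} ≥ 2x` the main term wins wherever the phase is `kπ + π/2`. For `2 ≤ k ≤ w/2 - 3`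
these points lie in `(0, π)`, and `F` alternates in sign there, which gives `w/2 - 5` zeros of `p`
on the upper half circle and, by conjugation, as many on the lower one. The period relations give
zeros at `0, ±2, ±1/2` and double zeros at `±1`, and a Cauchy estimate gives `q'(0) ≈ 2π ≠ 0`, so
`deg p = w - 1`. Since `9 + (w - 10) = w - 1`, there is no room for further zeros or higher
multiplicities.
-/

open Real Polynomial Complex Metric Set ComplexConjugate

namespace Polynomial

theorem sum_rootMultiplicity_le_natDegree {R : Type*} [CommRing R] [IsDomain R]
    (p : R[X]) (S : Finset R) : ∑ z ∈ S, p.rootMultiplicity z ≤ p.natDegree := by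
  classical
  calc ∑ z ∈ S, p.rootMultiplicity z = ∑ z ∈ S, p.roots.count z := by simp only [count_roots]
    _ ≤ ∑ z ∈ S ∪ p.roots.toFinset, p.roots.count z :=
      Finset.sum_le_sum_of_subset Finset.subset_union_left
    _ = Multiset.card p.roots :=
      Multiset.sum_count_eq_card fun z hz => Finset.mem_union_right _ (Multiset.mem_toFinset.2 hz)
    _ ≤ p.natDegree := card_roots' p

theorem rootMultiplicity_eq_of_natDegree_le_sum {R : Type*} [CommRing R] [IsDomain R]
    {p : R[X]} (hp : p ≠ 0) {S : Finset R} {m : R → ℕ}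
    (hm : ∀ z ∈ S, m z ≤ p.rootMultiplicity z) (hdeg : p.natDegree ≤ ∑ z ∈ S, m z) :
    (∀ z ∈ S, p.rootMultiplicity z = m z) ∧ ∀ z, p.IsRoot z → z ∈ S := by
  classical
  have hsum := Finset.sum_le_sum hm
  refine ⟨fun z hz => ((Finset.sum_eq_sum_iff_of_le hm).1 ?_ z hz).symm, fun z hz => ?_⟩
  · exact le_antisymm hsum (hdeg.trans' (sum_rootMultiplicity_le_natDegree p S))
  · by_contra hzS
    have hz := (rootMultiplicity_pos hp).2 hz
    have := sum_rootMultiplicity_le_natDegree p (insert z S)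
    rw [Finset.sum_insert hzS] at this
    omega

theorem eval_reflect {K : Type*} [Field K] {f : K[X]} {N : ℕ} (hf : f.natDegree ≤ N)
    {x : K} (hx : x ≠ 0) : (reflect N f).eval x = x ^ N * f.eval x⁻¹ := by
  let _ : Invertible x⁻¹ := invertibleOfNonzero (inv_ne_zero hx)
  have := eval₂_reflect_mul_pow (RingHom.id K) x⁻¹ N f hf
  simp only [invOf_eq_inv, inv_inv, eval₂_id] at this
  rw [← this, mul_left_comm, ← mul_pow, mul_inv_cancel₀ hx, one_pow, mul_one]

theorem eval_conj_of_forall_im_coeff_eq_zero {p : ℂ[X]} (hp : ∀ n, (p.coeff n).im = 0)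
    (z : ℂ) : p.eval (conj z) = conj (p.eval z) := by
  have hmap : p.map (starRingEnd ℂ) = p := by
    ext n; rw [coeff_map]; exact conj_eq_iff_im.2 (hp n)
  conv_lhs => rw [← hmap]
  rw [eval_map, eval₂_at_apply]

end Polynomial

theorem norm_le_mul_norm_sq_sub_one {f : ℂ → ℂ} (hf : Differentiable ℂ f)
    (h1 : f 1 = 0) (hm1 : f (-1) = 0) {R M : ℝ} (hR : 1 < R)
    (hM : ∀ z ∈ sphere (0 : ℂ) R, ‖f z‖ ≤ M) {z : ℂ} (hz : ‖z‖ ≤ R) :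
    ‖f z‖ ≤ M / (R ^ 2 - 1) * ‖z ^ 2 - 1‖ := by
  have hdiff : ∀ {g : ℂ → ℂ} (c : ℂ), Differentiable ℂ g → Differentiable ℂ (dslope g c) :=
    fun c hg => differentiableOn_univ.1 <|
      (differentiableOn_dslope Filter.univ_mem).2 hg.differentiableOn
  set g := dslope (dslope f 1) (-1)
  have hfg : ∀ z, f z = (z ^ 2 - 1) * g z := by
    intro z
    have e1 := sub_smul_dslope f 1 z
    have e2 := sub_smul_dslope (dslope f 1) (-1) z
    have e3 := sub_smul_dslope f 1 (-1)
    simp only [smul_eq_mul, h1, hm1, sub_zero] at e1 e2 e3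
    have : dslope f 1 (-1) = 0 := by
      have : (-1 - 1 : ℂ) ≠ 0 := by norm_num
      exact (mul_eq_zero.1 e3).resolve_left this
    rw [this, sub_zero] at e2
    rw [← e1, ← e2]; ring
  have hR0 : 0 < R ^ 2 - 1 := by nlinarith
  have hsphere : ∀ z ∈ sphere (0 : ℂ) R, ‖g z‖ ≤ M / (R ^ 2 - 1) := by
    intro z hz
    rw [mem_sphere_zero_iff_norm] at hz
    have hlow : R ^ 2 - 1 ≤ ‖z ^ 2 - 1‖ := by
      have := norm_sub_norm_le (z ^ 2) 1
      rw [norm_pow, hz, norm_one] at this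
      linarith
    rw [le_div_iff₀ hR0]
    calc ‖g z‖ * (R ^ 2 - 1) ≤ ‖g z‖ * ‖z ^ 2 - 1‖ := by gcongr
      _ = ‖f z‖ := by rw [hfg, norm_mul, mul_comm]
      _ ≤ M := hM z (mem_sphere_zero_iff_norm.2 hz)
  have hg := norm_le_of_forall_mem_frontier_norm_le isBounded_ball
    (hdiff (-1) (hdiff 1 hf)).diffContOnCl (by rwa [frontier_ball 0 (by linarith)])
    (by rwa [closure_ball 0 (by linarith), mem_closedBall_zero_iff] : z ∈ closure (ball 0 R))
  rw [hfg, norm_mul, mul_comm]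
  exact mul_le_mul_of_nonneg_right hg (norm_nonneg _)

theorem hasDerivAt_sin_two_pi_mul (z : ℂ) :
    HasDerivAt (fun z : ℂ => Complex.sin (2 * π * z)) (Complex.cos (2 * π * z) * (2 * π)) z := by
  simpa using ((hasDerivAt_id z).const_mul (2 * (π : ℂ))).csin

theorem coeff_one_ne_zero_of_norm_sub_sin_le {q : ℂ[X]} {R M : ℝ} (hR : 0 < R)
    (hM : M < 2 * π * R)
    (hq : ∀ z ∈ sphere (0 : ℂ) R, ‖q.eval z - Complex.sin (2 * π * z)‖ ≤ M) :
    q.coeff 1 ≠ 0 := by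
  intro h1
  set f : ℂ → ℂ := fun z => q.eval z - Complex.sin (2 * π * z)
  have hderiv : deriv f 0 = q.coeff 1 - 2 * π := by
    have : HasDerivAt f _ 0 := (q.hasDerivAt 0).sub (hasDerivAt_sin_two_pi_mul 0)
    rw [this.deriv]
    simp [← coeff_zero_eq_eval_zero, coeff_derivative]
  have hf : Differentiable ℂ f := q.differentiable.sub (by fun_prop)
  have hcauchy := norm_deriv_le_of_forall_mem_sphere_norm_le hR hf.diffContOnCl hq
  rw [hderiv, h1, zero_sub, norm_neg, le_div_iff₀ hR] at hcauchy
  have : ‖(2 * π : ℂ)‖ = 2 * π := by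
    rw [← ofReal_ofNat, ← ofReal_mul, norm_real, Real.norm_of_nonneg (by positivity)]
  rw [this] at hcauchy
  linarith

theorem norm_exp_mul_I_sq_sub_one (θ : ℝ) : ‖cexp (θ * I) ^ 2 - 1‖ = 2 * |Real.sin θ| := by
  have : cexp (θ * I) ^ 2 - 1 = cexp (θ * I) * (2 * Real.sin θ * I) := by
    rw [exp_mul_I, ofReal_sin]
    linear_combination Complex.sin_sq_add_cos_sq θ - Complex.sin θ ^ 2 * I_sq
  rw [this, norm_mul, norm_exp_ofReal_mul_I, norm_mul, norm_mul, norm_I, norm_real,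
    Real.norm_eq_abs, Complex.norm_ofNat]
  ring

theorem norm_eval_sub_sin_le_on_circle {q : ℂ[X]} (hq1 : q.eval 1 = 0) (hqm1 : q.eval (-1) = 0)
    {R M : ℝ} (hR : 1 < R)
    (hq : ∀ z ∈ sphere (0 : ℂ) R, ‖q.eval z - Complex.sin (2 * π * z)‖ ≤ M) (θ : ℝ) :
    ‖q.eval (cexp (θ * I)) - Complex.sin (2 * π * cexp (θ * I))‖
      ≤ 2 * M / (R ^ 2 - 1) * |Real.sin θ| := by
  have := norm_le_mul_norm_sq_sub_one (f := fun z => q.eval z - Complex.sin (2 * π * z))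
    (q.differentiable.sub (by fun_prop)) (by simp [hq1]) (by simp [hqm1]) hR hq
    (z := cexp (θ * I)) (by rw [norm_exp_ofReal_mul_I]; exact hR.le)
  rw [norm_exp_mul_I_sq_sub_one] at this
  exact this.trans_eq (by ring)

theorem exists_finset_zeros_of_alternating_sign {F : ℝ → ℝ} (hF : Continuous F) {t : ℕ → ℝ} :
    ∀ {N : ℕ}, StrictMonoOn t (Iic N) → (∀ j ≤ N, 0 < (-1) ^ j * F (t j)) →
      ∃ Z : Finset ℝ, Z.card = N ∧ ∀ x ∈ Z, x ∈ Ioo (t 0) (t N) ∧ F x = 0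
  | 0, _, _ => ⟨∅, rfl, by simp⟩
  | N + 1, ht, hsign => by
    obtain ⟨Z, hZcard, hZ⟩ := exists_finset_zeros_of_alternating_sign hF
      (ht.mono (Iic_subset_Iic.2 N.le_succ)) fun j hj => hsign j (hj.trans N.le_succ)
    have hlt : t N < t (N + 1) := ht (by simp) (by simp) N.lt_succ_self
    have h0N : t 0 ≤ t N := ht.monotoneOn (by simp) (by simp) N.zero_le
    obtain ⟨u, hu, hFu⟩ : ∃ u ∈ Ioo (t N) (t (N + 1)), (-1) ^ N * F u = 0 := by
      refine intermediate_value_Ioo' hlt.le (continuous_const.mul hF).continuousOn ⟨?_, ?_⟩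
      · have := hsign (N + 1) le_rfl
        simp only [Pi.mul_apply, pow_succ] at this ⊢
        linarith
      · exact hsign N N.le_succ
    have huZ : u ∉ Z := fun h => (hZ u h).1.2.not_gt hu.1
    refine ⟨insert u Z, by rw [Finset.card_insert_of_notMem huZ, hZcard], ?_⟩
    simp only [Finset.mem_insert, forall_eq_or_imp]
    refine ⟨⟨⟨h0N.trans_lt hu.1, hu.2⟩, ?_⟩,
      fun x hx => ⟨⟨(hZ x hx).1.1, (hZ x hx).1.2.trans hlt⟩, (hZ x hx).2⟩⟩
    exact (mul_eq_zero.1 hFu).resolve_left (pow_ne_zero _ (by norm_num))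

theorem strictMono_mul_add_mul_cos {a b : ℝ} (h : |b| < a) :
    StrictMono fun θ => a * θ + b * Real.cos θ := by
  refine strictMono_of_deriv_pos fun θ => ?_
  have hd : HasDerivAt (fun θ => a * θ + b * Real.cos θ) (a - b * Real.sin θ) θ := by
    simpa [sub_eq_add_neg] using
      ((hasDerivAt_id θ).const_mul a).fun_add ((Real.hasDerivAt_cos θ).const_mul b)
  have : b * Real.sin θ ≤ |b| := calc
    b * Real.sin θ ≤ |b * Real.sin θ| := le_abs_self _
    _ = |b| * |Real.sin θ| := abs_mul _ _
    _ ≤ |b| := mul_le_of_le_one_right (abs_nonneg _) (Real.abs_sin_le_one _)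
  rw [hd.deriv]
  linarith

section PeriodRelations

variable {w : ℕ} {p q : ℂ[X]}

theorem eq_add_reflect_of_eval_eq (hq : q.natDegree ≤ w)
    (hp : ∀ x : ℂ, x ≠ 0 → p.eval x = q.eval x + x ^ w * q.eval x⁻¹) :
    p = q + reflect w q := by
  refine eq_of_infinite_eval_eq _ _ ((Set.finite_singleton 0).infinite_compl.mono fun x hx => ?_)
  change p.eval x = (q + reflect w q).eval x
  rw [eval_add, eval_reflect hq hx, hp x hx]

theorem natDegree_add_reflect (hq : q.natDegree < w - 1) (hq0 : q.coeff 0 = 0)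
    (hq1 : q.coeff 1 ≠ 0) : (q + reflect w q).natDegree = w - 1 := by
  have hcoeff : ∀ k, (q + reflect w q).coeff k = q.coeff k + q.coeff (revAt w k) := fun k => by
    rw [coeff_add, coeff_reflect]
  refine natDegree_eq_of_le_of_coeff_ne_zero (natDegree_le_iff_coeff_eq_zero.2 fun k hk => ?_) ?_
  · rw [hcoeff, coeff_eq_zero_of_natDegree_lt (hq.trans hk)]
    rcases (Nat.lt_iff_add_one_le.1 hk).eq_or_lt with rfl | hk
    · rw [revAt_le (by omega), show w - (w - 1 + 1) = 0 by omega, hq0, add_zero]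
    · rw [revAt_eq_self_of_lt (by omega), coeff_eq_zero_of_natDegree_lt (hq.trans (by omega)),
        add_zero]
  · rwa [hcoeff, coeff_eq_zero_of_natDegree_lt hq, revAt_le (by omega),
      show w - (w - 1) = 1 by omega, zero_add]

theorem eval_eq_pow_mul_eval_inv
    (hp : ∀ x : ℂ, x ≠ 0 → p.eval x = q.eval x + x ^ w * q.eval x⁻¹) (x : ℂ) (hx : x ≠ 0) :
    p.eval x = x ^ w * p.eval x⁻¹ := by
  rw [hp x hx, hp x⁻¹ (inv_ne_zero hx), inv_inv, mul_add, inv_pow, mul_inv_cancel_left₀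
    (pow_ne_zero w hx), add_comm]

variable (hsym : ∀ x : ℂ, x ≠ 0 → p.eval x = x ^ w * p.eval x⁻¹)
include hsym

theorem eval_two_eq_zero (hw : Even w)
    (hU : ∀ x : ℂ, x ≠ 0 → x ≠ 1 →
      p.eval x + x ^ w * p.eval (1 - 1 / x) + (x - 1) ^ w * p.eval (-1 / (x - 1)) = 0)
    (hm1 : p.eval (-1) = 0) : p.eval 2 = 0 := by
  have h := hU (-1) (by norm_num) (by norm_num)
  rw [hm1, hw.neg_one_pow, show (1 : ℂ) - 1 / -1 = 2 by norm_num,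
    show (-1 : ℂ) - 1 = -2 by norm_num, hw.neg_pow, show (-1 : ℂ) / -2 = 2⁻¹ by norm_num,
    ← hsym 2 two_ne_zero] at h
  linear_combination h / 2

theorem derivative_eval_eq_zero {x₀ : ℂ} (hx₀ : x₀ ^ 2 = 1) (hx₀w : x₀ ^ w = 1)
    (hroot : p.eval x₀ = 0) : p.derivative.eval x₀ = 0 := by
  have hne : x₀ ≠ 0 := by rintro rfl; norm_num at hx₀
  have hinv : x₀⁻¹ = x₀ := inv_eq_of_mul_eq_one_right (by rw [← sq, hx₀])
  have hR : HasDerivAt (fun x => x ^ w * p.eval x⁻¹)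
      (w * x₀ ^ (w - 1) * p.eval x₀⁻¹ + x₀ ^ w * (p.derivative.eval x₀⁻¹ * -(x₀ ^ 2)⁻¹)) x₀ :=
    (hasDerivAt_pow w x₀).mul ((p.hasDerivAt x₀⁻¹).comp x₀ (hasDerivAt_inv hne))
  have h := Filter.EventuallyEq.deriv_eq (f₁ := fun x => p.eval x)
    (f := fun x => x ^ w * p.eval x⁻¹) <|
      Filter.eventually_of_mem (isOpen_ne.mem_nhds hne) fun x hx => hsym x hx
  rw [p.deriv, hR.deriv, hinv, hroot, hx₀, hx₀w] at h
  linear_combination h / 2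

theorem le_rootMultiplicity_of_period_relations (hw : Even w) (hp : p ≠ 0)
    (hodd : ∀ x : ℂ, p.eval (-x) = -p.eval x)
    (hU : ∀ x : ℂ, x ≠ 0 → x ≠ 1 →
      p.eval x + x ^ w * p.eval (1 - 1 / x) + (x - 1) ^ w * p.eval (-1 / (x - 1)) = 0)
    (h1 : p.eval 1 = 0) :
    ∀ z ∈ ({0, 2, -2, 1 / 2, -(1 / 2), 1, -1} : Finset ℂ),
      (if z = 1 ∨ z = -1 then 2 else 1) ≤ p.rootMultiplicity z := by
  have hneg : ∀ {x : ℂ}, p.eval x = 0 → p.eval (-x) = 0 := fun h => by rw [hodd, h, neg_zero]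
  have h0 : p.eval 0 = 0 := by simpa [CharZero.eq_neg_self_iff] using hodd 0
  have h2 := eval_two_eq_zero hsym hw hU (hneg h1)
  have hhalf : p.eval (1 / 2) = 0 := by
    have := hsym 2 two_ne_zero
    rw [h2, eq_comm, mul_eq_zero] at this
    simpa using this.resolve_left (pow_ne_zero w two_ne_zero)
  have hdouble : ∀ x₀ : ℂ, x₀ ^ 2 = 1 → p.eval x₀ = 0 → 2 ≤ p.rootMultiplicity x₀ := by
    intro x₀ hx₀ h
    obtain ⟨r, rfl⟩ := hw
    have hx₀w : x₀ ^ (r + r) = 1 := by rw [← two_mul, pow_mul, hx₀, one_pow]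
    exact (one_lt_rootMultiplicity_iff_isRoot hp).2 ⟨h, derivative_eval_eq_zero hsym hx₀ hx₀w h⟩
  have hsimple : ∀ x, p.eval x = 0 → 1 ≤ p.rootMultiplicity x := fun x h =>
    (rootMultiplicity_pos hp).2 h
  simp only [Finset.mem_insert, Finset.mem_singleton]
  rintro z (rfl | rfl | rfl | rfl | rfl | rfl | rfl) <;> norm_num
  exacts [hsimple _ h0, hsimple _ h2, hsimple _ (hneg h2), hsimple _ hhalf, hsimple _ (hneg hhalf),
    hdouble _ (by norm_num) h1, hdouble _ (by norm_num) (hneg h1)]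

end PeriodRelations

theorem two_mul_re_exp_mul_sin (a u v : ℝ) :
    2 * (cexp (-(a * I)) * Complex.sin (u + v * I)).re
      = rexp v * Real.sin (a + u) + rexp (-v) * Real.sin (u - a) := by
  rw [← neg_mul, ← ofReal_neg, exp_mul_I, Complex.sin_add_mul_I, ← ofReal_cos, ← ofReal_sin,
    ← ofReal_cos, ← ofReal_sin, ← ofReal_cosh, ← ofReal_sinh]
  simp only [mul_re, mul_im, add_re, add_im, ofReal_re, ofReal_im, I_re, I_im]
  rw [Real.cosh_eq, Real.sinh_eq, Real.sin_add, Real.sin_sub, Real.cos_neg, Real.sin_neg]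
  ring

noncomputable def circleProfile (w : ℕ) (q : ℂ[X]) (θ : ℝ) : ℝ :=
  2 * (cexp (-((w / 2 * θ : ℝ) * I)) * q.eval (cexp (θ * I))).re

theorem continuous_circleProfile (w : ℕ) (q : ℂ[X]) : Continuous (circleProfile w q) := by
  unfold circleProfile; fun_prop

theorem eval_exp_mul_I_eq_mul_circleProfile {w : ℕ} {p q : ℂ[X]}
    (hq : ∀ n, (q.coeff n).im = 0)
    (hp : ∀ x : ℂ, x ≠ 0 → p.eval x = q.eval x + x ^ w * q.eval x⁻¹) (θ : ℝ) :
    p.eval (cexp (θ * I)) = cexp ((w / 2 * θ : ℝ) * I) * circleProfile w q θ := by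
  rw [circleProfile]
  set u := cexp ((w / 2 * θ : ℝ) * I)
  set e := cexp (θ * I)
  have hu : u * conj u = 1 := by
    rw [mul_conj, normSq_eq_norm_sq, norm_exp_ofReal_mul_I, one_pow, ofReal_one]
  have hue : u ^ 2 = e ^ w := by
    rw [← Complex.exp_nat_mul, ← Complex.exp_nat_mul]; congr 1; push_cast; ring
  have hconj : conj u = cexp (-((w / 2 * θ : ℝ) * I)) := by
    rw [← exp_conj, map_mul, conj_ofReal, conj_I, mul_neg]
  have he : e⁻¹ = conj e := by
    rw [← Complex.exp_neg, ← exp_conj, map_mul, conj_ofReal, conj_I, mul_neg]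
  rw [← hconj, ← add_conj]
  rw [hp e (exp_ne_zero _), he, eval_conj_of_forall_im_coeff_eq_zero hq, ← hue, map_mul,
    conj_conj]
  linear_combination (-q.eval e) * hu

theorem abs_circleProfile_sub_le (w : ℕ) (q : ℂ[X]) (θ : ℝ) {ε : ℝ}
    (hε : ‖q.eval (cexp (θ * I)) - Complex.sin (2 * π * cexp (θ * I))‖ ≤ ε) :
    |circleProfile w q θ - rexp (2 * π * Real.sin θ) * Real.sin (w / 2 * θ + 2 * π * Real.cos θ)|
      ≤ rexp (-(2 * π * Real.sin θ)) + 2 * ε := by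
  set δ := q.eval (cexp (θ * I)) - Complex.sin (2 * π * cexp (θ * I))
  set a : ℝ := w / 2 * θ
  have harg : 2 * π * cexp (θ * I) = (2 * π * Real.cos θ : ℝ) + (2 * π * Real.sin θ : ℝ) * I := by
    rw [exp_mul_I, ← ofReal_cos, ← ofReal_sin]; push_cast; ring
  have hsplit : circleProfile w q θ
      = 2 * (cexp (-(a * I)) * Complex.sin (2 * π * cexp (θ * I))).re
        + 2 * (cexp (-(a * I)) * δ).re := by
    rw [circleProfile, ← mul_add, ← add_re, ← mul_add, add_sub_cancel]
  have hδ : |2 * (cexp (-(a * I)) * δ).re| ≤ 2 * ε := by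
    rw [abs_mul, abs_two]
    gcongr
    calc |(cexp (-(a * I)) * δ).re| ≤ ‖cexp (-(a * I)) * δ‖ := abs_re_le_norm _
      _ = ‖δ‖ := by rw [norm_mul, ← neg_mul, ← ofReal_neg, norm_exp_ofReal_mul_I, one_mul]
      _ ≤ ε := hε
  have hsin : |rexp (-(2 * π * Real.sin θ)) * Real.sin (2 * π * Real.cos θ - a)|
      ≤ rexp (-(2 * π * Real.sin θ)) := by
    rw [abs_mul, abs_of_pos (Real.exp_pos _)]
    exact mul_le_of_le_one_right (Real.exp_pos _).le (Real.abs_sin_le_one _)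
  rw [hsplit, harg, two_mul_re_exp_mul_sin]
  refine le_trans (le_of_eq ?_) ((abs_add_le _ _).trans (add_le_add hsin hδ))
  congr 1
  ring

theorem neg_one_pow_mul_circleProfile_pos {w : ℕ} {q : ℂ[X]} {θ c : ℝ} (hθ : θ ∈ Ioo 0 π)
    (hc : c < 2 * π)
    (hq : ‖q.eval (cexp (θ * I)) - Complex.sin (2 * π * cexp (θ * I))‖ ≤ c * Real.sin θ)
    {k : ℕ} (hk : w / 2 * θ + 2 * π * Real.cos θ = k * π + π / 2) :
    0 < (-1) ^ k * circleProfile w q θ := by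
  have hs := Real.sin_pos_of_pos_of_lt_pi hθ.1 hθ.2
  have hest := abs_le.1 (abs_circleProfile_sub_le w q θ hq)
  have hsink : Real.sin (k * π + π / 2) = (-1) ^ k := by
    rw [Real.sin_add_pi_div_two, Real.cos_nat_mul_pi]
  rw [hk, hsink] at hest
  have hsinh :
      2 * (2 * π * Real.sin θ) ≤ rexp (2 * π * Real.sin θ) - rexp (-(2 * π * Real.sin θ)) := by
    have := Real.self_le_sinh_iff.2 (by positivity : 0 ≤ 2 * π * Real.sin θ)
    rw [Real.sinh_eq] at this
    linarith
  have hgap := mul_pos hs (sub_pos.2 hc)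
  rcases neg_one_pow_eq_or ℝ k with h | h <;> rw [h] at hest ⊢ <;> linarith

theorem exists_finset_circleProfile_zeros {w : ℕ} {q : ℂ[X]} (hw : Even w) (hw4 : 4 * π < w)
    {c : ℝ} (hc : c < 2 * π)
    (hq : ∀ θ : ℝ,
      ‖q.eval (cexp (θ * I)) - Complex.sin (2 * π * cexp (θ * I))‖ ≤ c * |Real.sin θ|) :
    ∃ Θ : Finset ℝ, Θ.card = w / 2 - 5 ∧ ∀ θ ∈ Θ, θ ∈ Ioo 0 π ∧ circleProfile w q θ = 0 := by
  obtain ⟨n, rfl⟩ := hw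
  have hn : ((n + n : ℕ) : ℝ) / 2 = n := by push_cast; ring
  have hn7 : 7 ≤ n := by
    have : (6 : ℝ) < n := by rw [← hn]; linarith [Real.pi_gt_three]
    exact_mod_cast this
  set β : ℝ → ℝ := fun θ => ((n + n : ℕ) : ℝ) / 2 * θ + 2 * π * Real.cos θ
  have hβ : StrictMono β := strictMono_mul_add_mul_cos <| by
    rw [abs_of_pos Real.two_pi_pos]; linarith
  have hβc : Continuous β := by fun_prop
  set N := n - 5
  set t : ℕ → ℝ := fun j => Function.invFun β ((j + 2 : ℕ) * π + π / 2)
  have ht : ∀ j ≤ N, t j ∈ Ioo 0 π ∧ β (t j) = (j + 2 : ℕ) * π + π / 2 := by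
    intro j hj
    have hjn : (j : ℝ) + 5 ≤ n := by exact_mod_cast (by omega : j + 5 ≤ n)
    obtain ⟨θ, hθ, hβθ⟩ := intermediate_value_Ioo Real.pi_pos.le hβc.continuousOn
      (show ((j + 2 : ℕ) : ℝ) * π + π / 2 ∈ Ioo (β 0) (β π) by
        simp only [β, hn, Real.cos_zero, Real.cos_pi]
        push_cast
        constructor <;> nlinarith [Real.pi_pos])
    have hβt : β (t j) = β θ := (Function.invFun_eq ⟨θ, hβθ⟩).trans hβθ.symm
    exact ⟨hβ.injective hβt ▸ hθ, hβt.trans hβθ⟩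
  have htmono : StrictMonoOn t (Iic N) := fun i hi j hj hij => by
    rw [← hβ.lt_iff_lt, (ht i hi).2, (ht j hj).2]
    gcongr
  obtain ⟨Θ, hΘcard, hΘ⟩ := exists_finset_zeros_of_alternating_sign
    (continuous_circleProfile (n + n) q) htmono fun j hj => by
      have hsin := Real.sin_pos_of_pos_of_lt_pi (ht j hj).1.1 (ht j hj).1.2
      have h := neg_one_pow_mul_circleProfile_pos (ht j hj).1 hc
        (abs_of_pos hsin ▸ hq (t j)) (ht j hj).2
      rwa [pow_add, neg_one_sq, mul_one] at h
  refine ⟨Θ, by omega, fun θ hθ => ⟨?_, (hΘ θ hθ).2⟩⟩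
  exact ⟨(ht 0 (Nat.zero_le _)).1.1.trans (hΘ θ hθ).1.1, (hΘ θ hθ).1.2.trans (ht N le_rfl).1.2⟩

theorem injOn_exp_ofReal_mul_I : InjOn (fun θ : ℝ => cexp (θ * I)) (Ioc (-π) π) :=
  fun _ hx _ hy h => Circle.exp_injOn_Ioc (by linarith) hx hy (Subtype.ext h)

theorem exists_finset_roots_on_circle {p : ℂ[X]} (hp : ∀ n, (p.coeff n).im = 0)
    {Θ : Finset ℝ} (hΘ : ∀ θ ∈ Θ, θ ∈ Ioo 0 π ∧ p.IsRoot (cexp (θ * I))) :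
    ∃ C : Finset ℂ, C.card = 2 * Θ.card ∧ ∀ z ∈ C, p.IsRoot z ∧ ‖z‖ = 1 ∧ z.im ≠ 0 := by
  classical
  have hdisj : Disjoint Θ (Θ.image Neg.neg) := by
    rw [Finset.disjoint_right]
    rintro _ hx hxΘ
    obtain ⟨θ, hθ, rfl⟩ := Finset.mem_image.1 hx
    linarith [(hΘ θ hθ).1.1, (hΘ _ hxΘ).1.1]
  have hmem : ∀ θ ∈ Θ ∪ Θ.image Neg.neg,
      (θ ∈ Ioo 0 π ∨ -θ ∈ Ioo 0 π) ∧ p.IsRoot (cexp (θ * I)) := by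
    intro θ hθ
    rcases Finset.mem_union.1 hθ with hθ | hθ
    · exact ⟨Or.inl (hΘ θ hθ).1, (hΘ θ hθ).2⟩
    · obtain ⟨φ, hφ, rfl⟩ := Finset.mem_image.1 hθ
      refine ⟨Or.inr ((neg_neg φ).symm ▸ (hΘ φ hφ).1), ?_⟩
      have : cexp (↑(-φ) * I) = conj (cexp (φ * I)) := by
        rw [← exp_conj, map_mul, conj_ofReal, conj_I, ofReal_neg, neg_mul, mul_neg]
      rw [IsRoot, this, eval_conj_of_forall_im_coeff_eq_zero hp, (hΘ φ hφ).2, map_zero]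
  refine ⟨(Θ ∪ Θ.image Neg.neg).image fun θ : ℝ => cexp (θ * I), ?_, ?_⟩
  · rw [Finset.card_image_of_injOn, Finset.card_union_of_disjoint hdisj,
      Finset.card_image_of_injective _ neg_injective, two_mul]
    refine injOn_exp_ofReal_mul_I.mono fun θ hθ => ?_
    rcases (hmem θ hθ).1 with ⟨h0, hπ⟩ | ⟨h0, hπ⟩ <;> constructor <;> linarith
  · simp only [Finset.mem_image]
    rintro _ ⟨θ, hθ, rfl⟩
    refine ⟨(hmem θ hθ).2, norm_exp_ofReal_mul_I θ, ?_⟩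
    rw [exp_ofReal_mul_I_im]
    rcases (hmem θ hθ).1 with h | h
    · exact (Real.sin_pos_of_pos_of_lt_pi h.1 h.2).ne'
    · have := Real.sin_pos_of_pos_of_lt_pi h.1 h.2
      rw [Real.sin_neg] at this
      linarith

theorem rootMultiplicity_eq_of_special_and_circle_roots {p : ℂ[X]} (hp : p ≠ 0) {C : Finset ℂ}
    (hC : ∀ z ∈ C, p.IsRoot z ∧ ‖z‖ = 1 ∧ z.im ≠ 0)
    (hS : ∀ z ∈ ({0, 2, -2, 1 / 2, -(1 / 2), 1, -1} : Finset ℂ),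
      (if z = 1 ∨ z = -1 then 2 else 1) ≤ p.rootMultiplicity z)
    (hdeg : p.natDegree ≤ C.card + 9) :
    p.rootMultiplicity 0 = 1 ∧ p.rootMultiplicity 2 = 1 ∧ p.rootMultiplicity (-2) = 1 ∧
    p.rootMultiplicity (1 / 2) = 1 ∧ p.rootMultiplicity (-(1 / 2)) = 1 ∧
    p.rootMultiplicity 1 = 2 ∧ p.rootMultiplicity (-1) = 2 ∧
    (∀ z : ℂ, p.eval z = 0 →
      z ∉ ({0, 2, -2, 1 / 2, -(1 / 2), 1, -1} : Set ℂ) → ‖z‖ = 1) := by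
  classical
  set S : Finset ℂ := {0, 2, -2, 1 / 2, -(1 / 2), 1, -1}
  set m : ℂ → ℕ := fun z => if z = 1 ∨ z = -1 then 2 else 1
  have hreal : ∀ z ∈ S, z.im = 0 := by simp [S]
  have hdisj : Disjoint S C :=
    Finset.disjoint_right.2 fun z hz hzS => (hC z hz).2.2 (hreal z hzS)
  have hsum : ∑ z ∈ S ∪ C, m z = 9 + C.card := by
    rw [Finset.sum_union hdisj, Finset.card_eq_sum_ones C]
    congr 1
    · simp [S, m]; norm_num
    · refine Finset.sum_congr rfl fun z hz => if_neg ?_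
      rintro (rfl | rfl) <;> exact (hC _ hz).2.2 (by simp)
  have hm : ∀ z ∈ S ∪ C, m z ≤ p.rootMultiplicity z := by
    intro z hz
    rcases Finset.mem_union.1 hz with hz | hz
    · exact hS z hz
    · exact (if_neg fun h => (hC z hz).2.2 (by rcases h with rfl | rfl <;> simp)).trans_le
        ((rootMultiplicity_pos hp).2 (hC z hz).1)
  obtain ⟨hmult, hroots⟩ := rootMultiplicity_eq_of_natDegree_le_sum hp hm (by omega)
  have hmS : ∀ z ∈ S, p.rootMultiplicity z = m z := fun z hz =>
    hmult z (Finset.mem_union_left C hz)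
  refine ⟨?_, ?_, ?_, ?_, ?_, ?_, ?_, fun z hz hzS => ?_⟩
  rotate_right
  · have hzS : z ∉ S := by simpa [S] using hzS
    rcases Finset.mem_union.1 (hroots z hz) with h | h
    exacts [absurd h hzS, (hC z h).2.1]
  all_goals rw [hmS _ (by simp [S])]; norm_num [m]

/-- Let `w ≥ 78` be even and `q` a real-coefficient polynomial of degree
at most `w/2` with `q(1) = q(-1) = 0` which is within `1/100` of `sin(2πz)` on `|z| ≤ 5/4`.
If `p` is the polynomial with `p(x) = q(x) + x^w q(1/x)` for `x ≠ 0`, `p` is odd, and `p`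
satisfies the three-term period relation, then `p` has degree `w - 1`, simple zeros at
`0, ±2, ±1/2`, double zeros at `±1`, and all its remaining zeros lie on `|z| = 1`. -/
theorem zeros_of_period_polynomial_abstract
    (w : ℕ) (hw : 78 ≤ w) (hweven : Even w)
    (q : Polynomial ℂ) (hqreal : ∀ n, (q.coeff n).im = 0)
    (hqdeg : q.natDegree ≤ w / 2)
    (hq1 : q.eval 1 = 0) (hqm1 : q.eval (-1) = 0)
    (hqsin : ∀ z : ℂ, ‖z‖ ≤ 5 / 4 →
      ‖q.eval z - Complex.sin (2 * (π : ℂ) * z)‖ ≤ 1 / 100)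
    (p : Polynomial ℂ)
    (hp : ∀ x : ℂ, x ≠ 0 → p.eval x = q.eval x + x ^ w * q.eval x⁻¹)
    (hodd : ∀ x : ℂ, p.eval (-x) = -p.eval x)
    (hU : ∀ x : ℂ, x ≠ 0 → x ≠ 1 →
      p.eval x + x ^ w * p.eval (1 - 1 / x)
        + (x - 1) ^ w * p.eval (-1 / (x - 1)) = 0) :
    p ≠ 0 ∧ p.natDegree = w - 1 ∧
    p.rootMultiplicity 0 = 1 ∧ p.rootMultiplicity 2 = 1 ∧ p.rootMultiplicity (-2) = 1 ∧
    p.rootMultiplicity (1 / 2) = 1 ∧ p.rootMultiplicity (-(1 / 2)) = 1 ∧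
    p.rootMultiplicity 1 = 2 ∧ p.rootMultiplicity (-1) = 2 ∧
    (∀ z : ℂ, p.eval z = 0 →
      z ∉ ({0, 2, -2, 1 / 2, -(1 / 2), 1, -1} : Set ℂ) → ‖z‖ = 1) := by
  have hqsin' : ∀ z ∈ sphere (0 : ℂ) (5 / 4), ‖q.eval z - Complex.sin (2 * π * z)‖ ≤ 1 / 100 :=
    fun z hz => hqsin z (mem_sphere_zero_iff_norm.1 hz).le
  have hq1' : q.coeff 1 ≠ 0 :=
    coeff_one_ne_zero_of_norm_sub_sin_le (by norm_num) (by linarith [pi_gt_three]) hqsin'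
  have hpq : p = q + reflect w q :=
    eq_add_reflect_of_eval_eq (hqdeg.trans (Nat.div_le_self w 2)) hp
  have hq0 : q.coeff 0 = 0 := by
    have hp0 : p.eval 0 = 0 := by simpa [CharZero.eq_neg_self_iff] using hodd 0
    rwa [← coeff_zero_eq_eval_zero, hpq, coeff_add, coeff_reflect, revAt_zero,
      coeff_eq_zero_of_natDegree_lt (by omega : q.natDegree < w), add_zero] at hp0
  have hdeg : p.natDegree = w - 1 := hpq ▸ natDegree_add_reflect (by omega) hq0 hq1'
  have hpne : p ≠ 0 := by rintro rfl; rw [natDegree_zero] at hdeg; omega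
  obtain ⟨Θ, hΘcard, hΘ⟩ := exists_finset_circleProfile_zeros hweven
    (by have : (78 : ℝ) ≤ w := by exact_mod_cast hw
        linarith [pi_lt_d2]) (by norm_num; linarith [pi_gt_three])
    (norm_eval_sub_sin_le_on_circle hq1 hqm1 (by norm_num) hqsin')
  obtain ⟨C, hCcard, hC⟩ := exists_finset_roots_on_circle (p := p)
    (by simp [hpq, coeff_reflect, hqreal]) fun θ hθ => ⟨(hΘ θ hθ).1, by
      rw [IsRoot, eval_exp_mul_I_eq_mul_circleProfile hqreal hp, (hΘ θ hθ).2, ofReal_zero,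
        mul_zero]⟩
  have hw2 := hweven.two_dvd
  refine ⟨hpne, hdeg, rootMultiplicity_eq_of_special_and_circle_roots hpne hC ?_ (by omega)⟩
  exact le_rootMultiplicity_of_period_relations (eval_eq_pow_mul_eval_inv hp) hweven hpne hodd
    hU (by rw [hp 1 one_ne_zero, inv_one, hq1]; ring)
end
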